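/- In the exponential-activation setup, for any ε > 0 and δ ∈ (0, 1/4), suppose D ≥ 2048·ln(6m/ε), D ≥ 2048·ln(6m/δ), D ≥ 6·ln(2m), and m > 8·ln(6/δ). Then for every γ ∈ [0,1], the generalization error of the algorithm with respect to the ramp loss L^(γ) satisfies ε_gen(m,δ) ≤ ε. -/

import Mathlib

open MeasureTheory ProbabilityTheory
open scoped ENNReal NNReal

noncomputable section

namespace ExpExample

/-- Squared Euclidean norm on `Fin n → ℝ`. -/
def sqnorm {n : ℕ} (v : Fin n → ℝ) : ℝ := ∑ i, v i ^ 2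

/-- An example: an input `(x₁, x₂) ∈ ℝ^D × ℝ^D` together with a real label. -/
abbrev Ex (D : ℕ) := ((Fin D → ℝ) × (Fin D → ℝ)) × ℝ

/-- The noise distribution: `D` i.i.d. standard Gaussian `N(0,1)` coordinates. -/
def noise (D : ℕ) : Measure (Fin D → ℝ) :=
  Measure.pi fun _ => gaussianReal 0 1

/-- The data distribution `𝒟`: label `y` uniform on `{-1,1}`; given `y`,
`x₁ = y·u` and `x₂ ~ N(0, I)`. -/
def μD (D : ℕ) (u : Fin D → ℝ) : Measure (Ex D) :=
  (1/2 : ℝ≥0∞) • (noise D).map (fun x₂ => ((u, x₂), (1 : ℝ))) +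
  (1/2 : ℝ≥0∞) • (noise D).map (fun x₂ => ((-u, x₂), (-1 : ℝ)))

/-- Distribution of an i.i.d. `m`-sample from `𝒟`. -/
def μS (D m : ℕ) (u : Fin D → ℝ) : Measure (Fin m → Ex D) :=
  Measure.pi fun _ => μD D u

/-- The hypothesis learned on `S`:
`h_S(z) = Σᵢ y⁽ⁱ⁾·exp(‖(z + x⁽ⁱ⁾)/2‖₂²)`, where the squared norm on
`ℝ^{2D} = ℝ^D × ℝ^D` is the sum of the squared norms of the two components. -/
def alg (D m : ℕ) (S : Fin m → Ex D) : (Fin D → ℝ) × (Fin D → ℝ) → ℝ :=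
  fun z => ∑ i, (S i).2 *
    Real.exp (sqnorm ((1/2 : ℝ) • (z.1 + (S i).1.1)) +
              sqnorm ((1/2 : ℝ) • (z.2 + (S i).1.2)))

/-- The ramp loss `L^{(γ)}`. -/
def ramp (γ y' y : ℝ) : ℝ :=
  if y * y' ≤ 0 then 1 else if γ ≤ y * y' then 0 else 1 - y * y' / γ

/-- Expected (test) loss of a hypothesis. -/
def testLoss (D : ℕ) (u : Fin D → ℝ) (γ : ℝ)
    (h : (Fin D → ℝ) × (Fin D → ℝ) → ℝ) : ℝ :=
  ∫ z, ramp γ (h z.1) z.2 ∂(μD D u)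

/-- Empirical loss of a hypothesis on a sample `S`. -/
def empLoss (D m : ℕ) (γ : ℝ) (h : (Fin D → ℝ) × (Fin D → ℝ) → ℝ)
    (S : Fin m → Ex D) : ℝ :=
  (1 / (m : ℝ)) * ∑ i, ramp γ (h (S i).1) (S i).2

/-- The generalization error `ε_gen(m,δ)` of the algorithm w.r.t. `L^{(γ)}`. -/
def genErr (D m : ℕ) (u : Fin D → ℝ) (γ δ : ℝ) : ℝ :=
  sInf {ε : ℝ | 0 ≤ ε ∧
    ENNReal.ofReal (1 - δ) ≤
      μS D m u {S | testLoss D u γ (alg D m S)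
        - empLoss D m γ (alg D m S) S ≤ ε}}

/-- The tightest algorithm-dependent uniform convergence bound `ε_unif-alg(m,δ)`
w.r.t. `L^{(γ)}`. -/
def unifAlg (D m : ℕ) (u : Fin D → ℝ) (γ δ : ℝ) : ℝ :=
  sInf {ε : ℝ | 0 ≤ ε ∧
    ∃ 𝒮 : Set (Fin m → Ex D), MeasurableSet 𝒮 ∧
      ENNReal.ofReal (1 - δ) ≤ μS D m u 𝒮 ∧
      ∀ S ∈ 𝒮, ∀ S' ∈ 𝒮,
        |testLoss D u γ (alg D m S') - empLoss D m γ (alg D m S') S| ≤ ε}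

/-!
Condition on a sample `S` in which both labels occur, every `x₁⁽ⁱ⁾` equals `y⁽ⁱ⁾ • u`, and every
`‖x₂⁽ⁱ⁾‖²` is within `D/16` of `D`. For a test point `((y • u, g), y)` write
`bᵢ = ‖(g + x₂⁽ⁱ⁾)/2‖²`. Since `(y • u + y⁽ⁱ⁾ • u)/2` is `y • u` or `0` and `‖u‖² = D/4`, the `i`-th
summand of `y · h_S(y • u, g)` is `exp (D/4 + bᵢ)` when `y⁽ⁱ⁾ = y`, and `-exp bᵢ` otherwise.
Chernoff bounds for the Gaussian `g` put `‖g‖²` within `D/16` of `D` and every `⟨g, x₂⁽ⁱ⁾⟩` within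
`D/16` of `0`, outside an event of probability `(2 + 2m) e^{-D/2048} ≤ ε`. Then every `bᵢ` lies
within `D/16` of `D/2`, and one same-label summand `≥ e^{11D/16}` beats the at most `m` summands
`≥ -e^{9D/16}` because `e^{D/8} ≥ m + 1`, so the margin `y · h_S` is at least `1`. The test ramp
loss is therefore at most `ε` and the empirical loss is nonnegative. The conditions on `S` fail
with probability at most `2m e^{-D/2048} + 2 · 2^{-m} ≤ δ`.
-/

open Real

lemma inv_sqrt_le_exp {x b : ℝ} (hx : 0 < x) (h : 1 ≤ x * exp (2 * b)) : (√x)⁻¹ ≤ exp b := by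
  rw [← sqrt_inv, ← sqrt_sq (exp_pos b).le, ← exp_nat_mul]
  refine sqrt_le_sqrt ((inv_le_iff_one_le_mul₀' hx).2 ?_)
  simpa [mul_comm 2 b] using h

lemma exp_neg_div_le_div {a c x y : ℝ} (hc : 0 < c) (hx : 0 < x) (hy : 0 < y)
    (h : c * log (y / x) ≤ a) : exp (-a / c) ≤ x / y := by
  have hlog : -log (x / y) = log (y / x) := by rw [← log_inv, inv_div]
  rw [← le_log_iff_exp_le (by positivity), neg_div, neg_le, hlog, le_div_iff₀ hc]
  linarith

lemma half_pow_le_inv {x : ℝ} {m : ℕ} (hx : 0 < x) (h : 8 * log x < m) : (1 / 2 : ℝ) ^ m ≤ x⁻¹ := by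
  have hx2 : x ≤ 2 ^ m := by
    have := exp_le_exp.2 (show log x ≤ m * log 2 by nlinarith [log_two_gt_d9])
    rwa [exp_log hx, ← log_pow, exp_log (by positivity)] at this
  rw [one_div, inv_pow]
  exact inv_anti₀ hx hx2

section Gaussian

lemma integrable_gaussianReal_iff {f : ℝ → ℝ} {μ : ℝ} {v : ℝ≥0} (hv : v ≠ 0) :
    Integrable f (gaussianReal μ v) ↔ Integrable (fun x => gaussianPDFReal μ v x * f x) := by
  rw [gaussianReal_of_var_ne_zero _ hv, gaussianPDF_def,
    integrable_withDensity_iff_integrable_smul' (by fun_prop) (by simp)]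
  simp [gaussianPDFReal_nonneg]

lemma gaussianPDFReal_mul_exp_mul_sq (t x : ℝ) :
    gaussianPDFReal 0 1 x * exp (t * x ^ 2) = (√(2 * π))⁻¹ * exp (-(1/2 - t) * x ^ 2) := by
  rw [gaussianPDFReal, mul_assoc, ← exp_add]
  congr 2 <;> [simp; (push_cast; ring)]

lemma integrable_exp_mul_sq_gaussianReal {t : ℝ} (ht : t < 1/2) :
    Integrable (fun x => exp (t * x ^ 2)) (gaussianReal 0 1) := by
  rw [integrable_gaussianReal_iff one_ne_zero]
  simp_rw [gaussianPDFReal_mul_exp_mul_sq]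
  exact (integrable_exp_neg_mul_sq (by linarith)).const_mul _

-- For `t ≥ 1/2` both sides are junk values `0`.
lemma integral_exp_mul_sq_gaussianReal (t : ℝ) :
    ∫ x, exp (t * x ^ 2) ∂gaussianReal 0 1 = (√(1 - 2 * t))⁻¹ := by
  rw [integral_gaussianReal_eq_integral_smul one_ne_zero]
  simp_rw [smul_eq_mul, gaussianPDFReal_mul_exp_mul_sq]
  rw [integral_const_mul, integral_gaussian, ← sqrt_inv, ← sqrt_mul (by positivity), ← sqrt_inv]
  congr 1
  field_simp

lemma integral_exp_mul_gaussianReal (s : ℝ) :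
    ∫ x, exp (s * x) ∂gaussianReal 0 1 = exp (s ^ 2 / 2) := by
  simpa [mgf] using congrFun (mgf_id_gaussianReal (μ := 0) (v := 1)) s

end Gaussian

section Product

variable {ι : Type*} [Fintype ι]

lemma measureReal_pi_le_sum_le {E : ι → Type*} [∀ i, MeasurableSpace (E i)]
    {ν : ∀ i, Measure (E i)} [∀ i, IsProbabilityMeasure (ν i)] {φ : ∀ i, E i → ℝ}
    (hφ : ∀ i, Integrable (fun x => exp (φ i x)) (ν i)) (a : ℝ) :
    (Measure.pi ν).real {g | a ≤ ∑ i, φ i (g i)} ≤ exp (-a) * ∏ i, ∫ x, exp (φ i x) ∂ν i := by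
  have hprod : (fun g : ∀ i, E i => exp (1 * ∑ i, φ i (g i))) = fun g => ∏ i, exp (φ i (g i)) := by
    simp [exp_sum]
  have h := measure_ge_le_exp_mul_mgf (μ := Measure.pi ν) (X := fun g => ∑ i, φ i (g i)) a
    zero_le_one (by rw [hprod]; exact Integrable.fintype_prod_dep hφ)
  rwa [mgf, hprod, integral_fintype_prod_eq_prod (fun i x => exp (φ i x)), neg_one_mul] at h

variable {α : Type*} [MeasurableSpace α] {μ : Measure α} [IsProbabilityMeasure μ]

lemma measureReal_pi_forall_mem (B : Set α) :
    (Measure.pi fun _ : ι => μ).real {S | ∀ i, S i ∈ B} = μ.real B ^ Fintype.card ι := by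
  have h : {S : ι → α | ∀ i, S i ∈ B} = Set.univ.pi fun _ => B := by ext; simp
  simp [h, measureReal_def, Measure.pi_pi]

lemma measureReal_pi_exists_mem_le (B : Set α) :
    (Measure.pi fun _ : ι => μ).real {S | ∃ i, S i ∈ B} ≤ Fintype.card ι * μ.real B := by
  classical
  have h : {S : ι → α | ∃ i, S i ∈ B} =
      ⋃ i, Set.univ.pi (Function.update (fun _ => Set.univ) i B) := by
    ext; simp [Set.univ_pi_update_univ]
  rw [h]
  refine (measureReal_iUnion_fintype_le _).trans_eq ?_
  rw [← nsmul_eq_mul, ← Finset.card_univ, ← Finset.sum_const]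
  refine Finset.sum_congr rfl fun p _ => ?_
  rw [measureReal_def, Measure.pi_pi,
    Finset.prod_eq_single p (fun j _ hj => by simp [hj]) (by simp)]
  simp [measureReal_def]

end Product

lemma sqnorm_nonneg {n : ℕ} (v : Fin n → ℝ) : 0 ≤ sqnorm v :=
  Finset.sum_nonneg fun _ _ => sq_nonneg _

lemma sqnorm_smul {n : ℕ} (c : ℝ) (v : Fin n → ℝ) : sqnorm (c • v) = c ^ 2 * sqnorm v := by
  simp [sqnorm, Finset.mul_sum, mul_pow]

lemma sqnorm_neg {n : ℕ} (v : Fin n → ℝ) : sqnorm (-v) = sqnorm v := by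
  simp [sqnorm]

lemma sqnorm_half_smul_add {n : ℕ} (v w : Fin n → ℝ) :
    sqnorm ((1/2 : ℝ) • (v + w)) = (sqnorm v + 2 * (v ⬝ᵥ w) + sqnorm w) / 4 := by
  simp only [sqnorm, dotProduct, Finset.mul_sum, ← Finset.sum_add_distrib, Finset.sum_div]
  exact Finset.sum_congr rfl fun i _ => by
    simp only [Pi.smul_apply, Pi.add_apply, smul_eq_mul]; ring

section Concentration

variable {D : ℕ}

instance : IsProbabilityMeasure (noise D) := by
  unfold noise; infer_instance

lemma noise_real_le_sqnorm_le {t : ℝ} (ht0 : 0 < t) (ht : t < 1/2) (a : ℝ) :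
    (noise D).real {g | a ≤ sqnorm g} ≤ exp (-(t * a)) * (√(1 - 2 * t))⁻¹ ^ D := by
  have h := measureReal_pi_le_sum_le (ν := fun _ : Fin D => gaussianReal 0 1)
    (fun _ => integrable_exp_mul_sq_gaussianReal ht) (t * a)
  simp_rw [← Finset.mul_sum, mul_le_mul_iff_right₀ ht0, integral_exp_mul_sq_gaussianReal] at h
  simpa [noise, sqnorm] using h

lemma noise_real_sqnorm_le_le {t : ℝ} (ht : 0 < t) (a : ℝ) :
    (noise D).real {g | sqnorm g ≤ a} ≤ exp (t * a) * (√(1 + 2 * t))⁻¹ ^ D := by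
  have h := measureReal_pi_le_sum_le (ν := fun _ : Fin D => gaussianReal 0 1)
    (fun _ => integrable_exp_mul_sq_gaussianReal (t := -t) (by linarith)) (-t * a)
  simp_rw [← Finset.mul_sum, integral_exp_mul_sq_gaussianReal] at h
  simpa [noise, sqnorm, mul_le_mul_iff_right₀ ht] using h

lemma noise_real_le_dotProduct_le {c : Fin D → ℝ} (hc : 0 < sqnorm c) {a : ℝ} (ha : 0 < a) :
    (noise D).real {g | a ≤ g ⬝ᵥ c} ≤ exp (-(a ^ 2 / (2 * sqnorm c))) := by
  obtain ⟨t, rfl⟩ : ∃ t, a = t * sqnorm c := ⟨a / sqnorm c, by field_simp⟩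
  have ht : 0 < t := pos_of_mul_pos_left ha hc.le
  have h := measureReal_pi_le_sum_le (ν := fun _ : Fin D => gaussianReal 0 1)
    (φ := fun i x => t * c i * x) (fun _ => integrable_exp_mul_gaussianReal _) (t * (t * sqnorm c))
  have hsum : ∀ g : Fin D → ℝ, ∑ i, t * c i * g i = t * (g ⬝ᵥ c) := fun g => by
    simp only [dotProduct, Finset.mul_sum]
    exact Finset.sum_congr rfl fun i _ => by ring
  simp_rw [hsum, mul_le_mul_iff_right₀ ht, integral_exp_mul_gaussianReal, ← exp_sum,
    ← exp_add] at h
  refine h.trans_eq (congrArg exp ?_)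
  have hs : ∑ i, (t * c i) ^ 2 / 2 = t ^ 2 * sqnorm c / 2 := by
    simp only [sqnorm, mul_pow, ← Finset.sum_div, ← Finset.mul_sum]
  rw [hs, ← neg_div]
  field_simp
  ring

lemma noise_real_le_abs_dotProduct_le {c : Fin D → ℝ} (hc : 0 < sqnorm c) {a : ℝ} (ha : 0 < a) :
    (noise D).real {g | a ≤ |g ⬝ᵥ c|} ≤ 2 * exp (-(a ^ 2 / (2 * sqnorm c))) := by
  have hsub : {g : Fin D → ℝ | a ≤ |g ⬝ᵥ c|} ⊆ {g | a ≤ g ⬝ᵥ c} ∪ {g | a ≤ g ⬝ᵥ -c} := by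
    intro g hg
    simpa only [Set.mem_union, Set.mem_ofPred_eq, dotProduct_neg, ← le_abs] using hg
  have hneg := noise_real_le_dotProduct_le (c := -c) (by rwa [sqnorm_neg]) ha
  rw [sqnorm_neg] at hneg
  calc _ ≤ _ := measureReal_mono hsub
    _ ≤ _ := measureReal_union_le _ _
    _ ≤ _ := by linarith [noise_real_le_dotProduct_le hc ha]

def NormTypical (g : Fin D → ℝ) : Prop := |sqnorm g - D| ≤ D / 16

-- Chernoff with `t = 1/64`: `(1 - 2t)^{-1/2} ≤ exp (t + 2t²)` and `t · 17/16 - (t + 2t²) = 1/2048`.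
lemma noise_real_sqnorm_large_le :
    (noise D).real {g | D + D / 16 ≤ sqnorm g} ≤ exp (-D / 2048) := by
  have hc : (√(1 - 2 * (1/64)))⁻¹ ≤ exp (33 / 2048) := by
    refine inv_sqrt_le_exp (by norm_num) ?_
    nlinarith [quadratic_le_exp_of_nonneg (x := 2 * (33 / 2048)) (by norm_num)]
  calc _ ≤ _ := noise_real_le_sqnorm_le (t := 1/64) (by norm_num) (by norm_num) (D + D / 16)
    _ ≤ exp (-(1/64 * (D + D / 16))) * exp (33 / 2048) ^ D := by gcongr
    _ = exp (-D / 2048) := by rw [← exp_nat_mul, ← exp_add]; ring_nf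

lemma noise_real_sqnorm_small_le :
    (noise D).real {g | sqnorm g ≤ D - D / 16} ≤ exp (-D / 2048) := by
  have hc : (√(1 + 2 * (1/64)))⁻¹ ≤ exp (-31 / 2048) := by
    refine inv_sqrt_le_exp (by norm_num) ?_
    nlinarith [add_one_le_exp (2 * (-31 / 2048))]
  calc _ ≤ _ := noise_real_sqnorm_le_le (t := 1/64) (by norm_num) (D - D / 16)
    _ ≤ exp (1/64 * (D - D / 16)) * exp (-31 / 2048) ^ D := by gcongr
    _ = exp (-D / 2048) := by rw [← exp_nat_mul, ← exp_add]; ring_nf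

lemma noise_real_not_normTypical_le :
    (noise D).real {g | ¬NormTypical g} ≤ 2 * exp (-D / 2048) := by
  have hsub : {g : Fin D → ℝ | ¬NormTypical g} ⊆
      {g | D + D / 16 ≤ sqnorm g} ∪ {g | sqnorm g ≤ D - D / 16} := by
    intro g hg
    simp only [NormTypical, Set.mem_ofPred_eq, abs_le, not_and_or, not_le] at hg
    rcases hg with hg | hg
    · exact Or.inr (by simp only [Set.mem_ofPred_eq]; linarith)
    · exact Or.inl (by simp only [Set.mem_ofPred_eq]; linarith)
  calc _ ≤ _ := measureReal_mono hsub
    _ ≤ _ := measureReal_union_le _ _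
    _ ≤ _ := by linarith [noise_real_sqnorm_large_le (D := D), noise_real_sqnorm_small_le (D := D)]

lemma noise_real_dotProduct_large_le (hD : 0 < (D : ℝ)) {c : Fin D → ℝ} (hc : NormTypical c) :
    (noise D).real {g | D / 16 < |g ⬝ᵥ c|} ≤ 2 * exp (-D / 2048) := by
  rw [NormTypical, abs_le] at hc
  have hc0 : 0 < sqnorm c := by linarith
  calc _ ≤ _ := measureReal_mono fun g (hg : D / 16 < |g ⬝ᵥ c|) => hg.le
    _ ≤ _ := noise_real_le_abs_dotProduct_le hc0 (by positivity : (0 : ℝ) < D / 16)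
    _ ≤ _ := by
      gcongr
      rw [neg_div, neg_le_neg_iff, div_pow, div_div, div_le_div_iff₀ (by norm_num) (by positivity)]
      nlinarith

end Concentration
section Margin

variable {D m : ℕ} {u : Fin D → ℝ}

def OnSupport (u : Fin D → ℝ) (e : Ex D) : Prop := (e.2 = 1 ∨ e.2 = -1) ∧ e.1.1 = e.2 • u

def GoodNoise (S : Fin m → Ex D) (g : Fin D → ℝ) : Prop :=
  NormTypical g ∧ ∀ i, |g ⬝ᵥ (S i).1.2| ≤ D / 16

def GoodSample (u : Fin D → ℝ) (S : Fin m → Ex D) : Prop :=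
  (∀ i, OnSupport u (S i) ∧ NormTypical (S i).1.2) ∧ (∃ i, (S i).2 = 1) ∧ ∃ i, (S i).2 = -1

lemma label_mul_term_eq (hu : sqnorm u = D / 4) {y y' : ℝ} (hy : y = 1 ∨ y = -1)
    (hy' : y' = 1 ∨ y' = -1) (b : ℝ) :
    y * (y' * exp (sqnorm ((1/2 : ℝ) • (y • u + y' • u)) + b)) =
      if y' = y then exp (D / 4 + b) else -exp b := by
  rw [← add_smul, smul_smul, sqnorm_smul, hu]
  rcases hy with rfl | rfl <;> rcases hy' with rfl | rfl <;> norm_num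

lemma one_le_label_mul_alg (hu : sqnorm u = D / 4) {S : Fin m → Ex D}
    (hS : ∀ i, OnSupport u (S i) ∧ NormTypical (S i).1.2) {y : ℝ} (hy : y = 1 ∨ y = -1)
    (hy_mem : ∃ i, (S i).2 = y) (hm : (m : ℝ) + 1 ≤ exp (D / 8)) {g : Fin D → ℝ}
    (hg : GoodNoise S g) : 1 ≤ y * alg D m S (y • u, g) := by
  obtain ⟨i₀, hi₀⟩ := hy_mem
  set b : Fin m → ℝ := fun i => sqnorm ((1/2 : ℝ) • (g + (S i).1.2))
  set M := exp (9 * D / 16)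
  have hb : ∀ i, |b i - D / 2| ≤ D / 16 := by
    intro i
    have h1 := abs_le.1 hg.1
    have h2 := abs_le.1 (hS i).2
    have h3 := abs_le.1 (hg.2 i)
    simp only [b, sqnorm_half_smul_add]
    rw [abs_le]; constructor <;> linarith
  set t : Fin m → ℝ := fun i => if (S i).2 = y then exp (D / 4 + b i) else -exp (b i)
  have hlow : ∀ i, -M ≤ t i := by
    intro i
    simp only [t]
    split_ifs
    · linarith [exp_pos (D / 4 + b i), exp_pos (9 * D / 16)]
    · exact neg_le_neg (exp_le_exp.2 (by linarith [(abs_le.1 (hb i)).2]))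
  have ht₀ : M * exp (D / 8) ≤ t i₀ := by
    simp only [t, if_pos hi₀, M, ← exp_add]
    exact exp_le_exp.2 (by linarith [(abs_le.1 (hb i₀)).1])
  have hsum : y * alg D m S (y • u, g) = ∑ i, t i := by
    simp only [alg, Finset.mul_sum]
    exact Finset.sum_congr rfl fun i _ => by
      rw [(hS i).1.2]; exact label_mul_term_eq hu hy (hS i).1.1 _
  have hM : 1 ≤ M := one_le_exp (by positivity)
  calc (1 : ℝ) ≤ t i₀ + M - m * M := by nlinarith
    _ ≤ ∑ i, (t i + M) - m * M := by
      gcongr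
      exact Finset.single_le_sum (f := fun i => t i + M) (fun i _ => by linarith [hlow i])
        (Finset.mem_univ i₀)
    _ = y * alg D m S (y • u, g) := by simp [Finset.sum_add_distrib, hsum]

end Margin

section Loss

lemma ramp_nonneg (γ y' y : ℝ) : 0 ≤ ramp γ y' y := by
  unfold ramp
  split_ifs with h₁ h₂
  · exact zero_le_one
  · exact le_rfl
  · rw [sub_nonneg, div_le_one (by linarith)]; linarith

lemma ramp_le_indicator {γ : ℝ} (hγ : γ ≤ 1) (y' y : ℝ) :
    ramp γ y' y ≤ if y * y' < 1 then 1 else 0 := by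
  unfold ramp
  by_cases h₁ : y * y' ≤ 0
  · simp [h₁, show y * y' < 1 by linarith]
  by_cases h₂ : γ ≤ y * y'
  · rw [if_neg h₁, if_pos h₂]; split_ifs <;> norm_num
  · rw [if_neg h₁, if_neg h₂, if_pos (by linarith)]
    linarith [div_pos (not_le.1 h₁) (by linarith : 0 < γ)]

lemma empLoss_nonneg (D m : ℕ) (γ : ℝ) (h : (Fin D → ℝ) × (Fin D → ℝ) → ℝ)
    (S : Fin m → Ex D) : 0 ≤ empLoss D m γ h S :=
  mul_nonneg (by positivity) (Finset.sum_nonneg fun _ _ => ramp_nonneg _ _ _)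

variable {D : ℕ} {u : Fin D → ℝ}

lemma μD_apply {A : Set (Ex D)} (hA : MeasurableSet A) :
    μD D u A = (1/2) * noise D ((fun g => ((u, g), (1 : ℝ))) ⁻¹' A) +
      (1/2) * noise D ((fun g => ((-u, g), (-1 : ℝ))) ⁻¹' A) := by
  rw [μD, Measure.add_apply, Measure.smul_apply, Measure.smul_apply,
    Measure.map_apply (by fun_prop) hA, Measure.map_apply (by fun_prop) hA, smul_eq_mul,
    smul_eq_mul]

instance : IsProbabilityMeasure (μD D u) where
  measure_univ := by
    simp [μD_apply MeasurableSet.univ, ENNReal.inv_two_add_inv_two]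

lemma μD_real_apply {A : Set (Ex D)} (hA : MeasurableSet A) :
    (μD D u).real A = ((noise D).real ((fun g => ((u, g), (1 : ℝ))) ⁻¹' A) +
      (noise D).real ((fun g => ((-u, g), (-1 : ℝ))) ⁻¹' A)) / 2 := by
  rw [measureReal_def, μD_apply hA, ENNReal.toReal_add (by finiteness) (by finiteness),
    ENNReal.toReal_mul, ENNReal.toReal_mul, ← measureReal_def, ← measureReal_def]
  norm_num
  ring

lemma testLoss_le_noise_real {γ : ℝ} (hγ : γ ≤ 1) {h : (Fin D → ℝ) × (Fin D → ℝ) → ℝ}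
    (hh : Measurable h) :
    testLoss D u γ h ≤
      ((noise D).real {g | h (u, g) < 1} + (noise D).real {g | -h (-u, g) < 1}) / 2 := by
  have hA : MeasurableSet {z : Ex D | z.2 * h z.1 < 1} :=
    measurableSet_lt (measurable_snd.mul (hh.comp measurable_fst)) measurable_const
  calc testLoss D u γ h ≤ ∫ z, {z : Ex D | z.2 * h z.1 < 1}.indicator 1 z ∂μD D u :=
        integral_mono_of_nonneg (ae_of_all _ fun z => ramp_nonneg _ _ _)
          ((integrable_const 1).indicator hA) (ae_of_all _ fun z => by
            simpa [Set.indicator_apply] using ramp_le_indicator hγ (h z.1) z.2)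
    _ = _ := by simp [integral_indicator_one hA, μD_real_apply hA]

lemma measurable_alg (D m : ℕ) (S : Fin m → Ex D) : Measurable (alg D m S) := by
  unfold alg sqnorm; fun_prop

end Loss

section Sample

variable {D m : ℕ} {u : Fin D → ℝ}

lemma noise_real_not_goodNoise_le (hD : 0 < (D : ℝ)) {S : Fin m → Ex D}
    (hS : ∀ i, NormTypical (S i).1.2) :
    (noise D).real {g | ¬GoodNoise S g} ≤ (2 + 2 * m) * exp (-D / 2048) := by
  have hsub : {g | ¬GoodNoise S g} ⊆
      {g | ¬NormTypical g} ∪ ⋃ i, {g | D / 16 < |g ⬝ᵥ (S i).1.2|} := by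
    intro g hg
    simp only [GoodNoise, Set.mem_ofPred_eq, Set.mem_union, Set.mem_iUnion, not_and_or, not_forall,
      not_le] at hg ⊢
    exact hg
  calc _ ≤ _ := measureReal_mono hsub
    _ ≤ _ := measureReal_union_le _ _
    _ ≤ 2 * exp (-D / 2048) + ∑ _i : Fin m, 2 * exp (-D / 2048) := by
      gcongr
      · exact noise_real_not_normTypical_le
      · exact (measureReal_iUnion_fintype_le _).trans
          (Finset.sum_le_sum fun i _ => noise_real_dotProduct_large_le hD (hS i))
    _ = _ := by rw [Finset.sum_const, Finset.card_fin, nsmul_eq_mul]; ring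

lemma testLoss_le_of_goodSample (hD : 0 < (D : ℝ)) (hu : sqnorm u = D / 4)
    (hm : (m : ℝ) + 1 ≤ exp (D / 8)) {γ : ℝ} (hγ : γ ≤ 1) {S : Fin m → Ex D}
    (hS : GoodSample u S) :
    testLoss D u γ (alg D m S) ≤ (2 + 2 * m) * exp (-D / 2048) := by
  obtain ⟨hS, hpos, hneg⟩ := hS
  have hbad := noise_real_not_goodNoise_le hD fun i => (hS i).2
  have hpos' : {g | alg D m S (u, g) < 1} ⊆ {g | ¬GoodNoise S g} := fun g hg hgood => by
    have := one_le_label_mul_alg hu hS (Or.inl rfl) hpos hm hgood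
    simp only [one_smul, one_mul] at this
    exact not_le.2 hg this
  have hneg' : {g | -alg D m S (-u, g) < 1} ⊆ {g | ¬GoodNoise S g} := fun g hg hgood => by
    have := one_le_label_mul_alg hu hS (Or.inr rfl) hneg hm hgood
    simp only [neg_one_smul, neg_one_mul] at this
    exact not_le.2 hg this
  calc _ ≤ _ := testLoss_le_noise_real hγ (measurable_alg D m S)
    _ ≤ _ := by
      linarith [measureReal_mono hpos' (μ := noise D), measureReal_mono hneg' (μ := noise D)]

lemma measurableSet_onSupport_normTypical :
    MeasurableSet {e : Ex D | OnSupport u e ∧ NormTypical e.1.2} := by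
  unfold OnSupport NormTypical sqnorm
  measurability

instance : IsProbabilityMeasure (μS D m u) := by
  unfold μS; infer_instance

lemma μS_real_not_goodSample_le :
    (μS D m u).real {S | ¬GoodSample u S} ≤ m * (2 * exp (-D / 2048)) + 2 * (1 / 2) ^ m := by
  set G := {e : Ex D | OnSupport u e ∧ NormTypical e.1.2}
  have hsub : {S : Fin m → Ex D | ¬GoodSample u S} ⊆
      {S | ∃ i, S i ∈ Gᶜ} ∪ {S | ∀ i, S i ∈ {e : Ex D | e.2 ≠ 1}} ∪
        {S | ∀ i, S i ∈ {e : Ex D | e.2 ≠ -1}} := by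
    intro S hS
    by_contra h
    simp only [Set.mem_union, Set.mem_ofPred_eq, Set.mem_compl_iff, not_or, not_exists, not_not,
      not_forall, ne_eq] at h
    exact hS ⟨h.1.1, h.1.2, h.2⟩
  have hG : (μD D u).real Gᶜ ≤ 2 * exp (-D / 2048) := by
    have hpos : (fun g => ((u, g), (1 : ℝ))) ⁻¹' Gᶜ = {g | ¬NormTypical g} := by
      ext g; simp [G, OnSupport]
    have hneg : (fun g => ((-u, g), (-1 : ℝ))) ⁻¹' Gᶜ = {g | ¬NormTypical g} := by
      ext g; simp [G, OnSupport]
    rw [μD_real_apply measurableSet_onSupport_normTypical.compl, hpos, hneg]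
    linarith [noise_real_not_normTypical_le (D := D)]
  have hlabel : ∀ y : ℝ, (y = 1 ∨ y = -1) → (μD D u).real {e : Ex D | e.2 ≠ y} ≤ 1 / 2 := by
    intro y hy
    rw [μD_real_apply (A := {e : Ex D | e.2 ≠ y})
      (measurableSet_eq_fun measurable_snd measurable_const).compl]
    rcases hy with rfl | rfl <;> norm_num
  calc _ ≤ _ := measureReal_mono hsub
    _ ≤ _ := (measureReal_union_le _ _).trans (add_le_add_left (measureReal_union_le _ _) _)
    _ ≤ _ := by
      rw [μS, measureReal_pi_forall_mem, measureReal_pi_forall_mem, Fintype.card_fin]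
      have h₁ := pow_le_pow_left₀ measureReal_nonneg (hlabel 1 (Or.inl rfl)) m
      have h₂ := pow_le_pow_left₀ measureReal_nonneg (hlabel (-1) (Or.inr rfl)) m
      have h₃ := (measureReal_pi_exists_mem_le (ι := Fin m) (μ := μD D u) Gᶜ).trans
        (mul_le_mul_of_nonneg_left hG (Nat.cast_nonneg _))
      rw [Fintype.card_fin] at h₃
      linarith

end Sample

lemma genErr_le_of_measureReal_compl_le {D m : ℕ} {u : Fin D → ℝ} {γ δ ε : ℝ}
    {𝒢 : Set (Fin m → Ex D)} (hε : 0 ≤ ε) (h𝒢 : (μS D m u).real 𝒢ᶜ ≤ δ)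
    (hgap : ∀ S ∈ 𝒢, testLoss D u γ (alg D m S) - empLoss D m γ (alg D m S) S ≤ ε) :
    genErr D m u γ δ ≤ ε := by
  refine csInf_le ⟨0, fun _ h => h.1⟩ ⟨hε, ENNReal.ofReal_le_of_le_toReal ?_⟩
  have hunion : 1 ≤ (μS D m u).real 𝒢 + (μS D m u).real 𝒢ᶜ := by
    simpa using measureReal_union_le (μ := μS D m u) 𝒢 𝒢ᶜ
  have hmono : (μS D m u).real 𝒢 ≤ (μS D m u).real
      {S | testLoss D u γ (alg D m S) - empLoss D m γ (alg D m S) S ≤ ε} := measureReal_mono hgap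
  rw [← measureReal_def]
  linarith

theorem generalization_error_small_general
    (D m : ℕ) (hm : 1 ≤ m) (u : Fin D → ℝ)
    (hu : Real.sqrt (sqnorm u) = Real.sqrt D / 2)
    (ε δ : ℝ) (hε : 0 < ε) (hδ0 : 0 < δ) (hδ1 : δ < 1 / 4)
    (hD1 : 2048 * Real.log (6 * m / ε) ≤ (D : ℝ))
    (hD2 : 2048 * Real.log (6 * m / δ) ≤ (D : ℝ))
    (hm' : 8 * Real.log (6 / δ) < (m : ℝ)) :
    ∀ γ ∈ Set.Icc (0 : ℝ) 1, genErr D m u γ δ ≤ ε := by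
  rintro γ ⟨-, hγ⟩
  have hm0 : (1 : ℝ) ≤ m := by exact_mod_cast hm
  have hmδ : 24 * m ≤ 6 * m / δ := by rw [le_div_iff₀ hδ0]; nlinarith
  have hD : 0 < (D : ℝ) := (mul_pos (by norm_num) (log_pos (by linarith))).trans_le hD2
  have hu' : sqnorm u = D / 4 := by
    rw [← sq_sqrt (sqnorm_nonneg u), hu, div_pow, sq_sqrt hD.le]; norm_num
  have hηε := exp_neg_div_le_div (by norm_num) hε (by positivity) hD1
  have hηδ := exp_neg_div_le_div (by norm_num) hδ0 (by positivity) hD2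
  have hexp : (m : ℝ) + 1 ≤ exp (D / 8) :=
    calc (m : ℝ) + 1 ≤ 6 * m / δ := by linarith
      _ = exp (log (6 * m / δ)) := (exp_log (by positivity)).symm
      _ ≤ exp (D / 8) := exp_le_exp.2 (by linarith [log_nonneg (by linarith : 1 ≤ 6 * m / δ)])
  have hhalf := half_pow_le_inv (by positivity) hm'
  rw [inv_div] at hhalf
  refine genErr_le_of_measureReal_compl_le (𝒢 := {S | GoodSample u S}) hε.le ?_ fun S hS => ?_
  · calc _ ≤ _ := μS_real_not_goodSample_le
      _ ≤ m * (2 * (δ / (6 * m))) + 2 * (δ / 6) := by gcongr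
      _ ≤ δ := by field_simp; linarith
  · calc _ ≤ testLoss D u γ (alg D m S) := sub_le_self _ (empLoss_nonneg _ _ _ _ _)
      _ ≤ _ := testLoss_le_of_goodSample hD hu' hexp hγ hS
      _ ≤ (2 + 2 * m) * (ε / (6 * m)) := by gcongr
      _ ≤ ε := by rw [mul_div_assoc', div_le_iff₀ (by positivity)]; nlinarith

/-- in the exponential-activation setup, for suitable `D` and
`m`, for every `γ ∈ [0,1]` the generalization error w.r.t. `L^{(γ)}`
satisfies `ε_gen(m,δ) ≤ ε`. -/
theorem generalization_error_small
    (D m : ℕ) (hm : 1 ≤ m) (u : Fin D → ℝ)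
    (hu : Real.sqrt (sqnorm u) = Real.sqrt D / 2)
    (ε δ : ℝ) (hε : 0 < ε) (hδ0 : 0 < δ) (hδ1 : δ < 1 / 4)
    (hD1 : 2048 * Real.log (6 * m / ε) ≤ (D : ℝ))
    (hD2 : 2048 * Real.log (6 * m / δ) ≤ (D : ℝ))
    (hD3 : 6 * Real.log (2 * m) ≤ (D : ℝ))
    (hm' : 8 * Real.log (6 / δ) < (m : ℝ)) :
    ∀ γ ∈ Set.Icc (0 : ℝ) 1, genErr D m u γ δ ≤ ε :=
  generalization_error_small_general D m hm u hu ε δ hε hδ0 hδ1 hD1 hD2 hm'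

end ExpExample
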